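/- Let (T_i) be the chase-time iteration. Then for every vertex v, the sequence (T_i(v)) is nonincreasing and converges to T*(v), where T* is the unique Bellman fixed point. -/

import Mathlib

/-!
Write `B T v = 1 + (1 - p v) * min_{u ∈ N v} T u` for the Bellman operator. It is monotone and
continuous, and `B (1 / p) ≤ 1 / p`, so its iterates from `1 / p` decrease; since `B` preserves
nonnegativity they are bounded below and converge to a fixed point of `B`, which is `T*` by
uniqueness. Decreasing iterates make the `min` with the previous value inert, so the chase-time
iteration is exactly this orbit.
-/

open Filter Function Topology

theorem Monotone.exists_isFixedPt_tendsto_iterate {α : Type*} [TopologicalSpace α] [T2Space α]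
    [ConditionallyCompleteLattice α] [InfConvergenceClass α] {f : α → α}
    (hf : Monotone f) (hfc : Continuous f) {x : α} (hx : f x ≤ x)
    (hbdd : BddBelow (Set.range fun n => f^[n] x)) :
    ∃ y, IsFixedPt f y ∧ Tendsto (fun n => f^[n] x) atTop (𝓝 y) := by
  have hlim := tendsto_atTop_ciInf (hf.antitone_iterate_of_map_le hx) hbdd
  exact ⟨_, isFixedPt_of_tendsto_iterate hlim hfc.continuousAt, hlim⟩

section Bellman

variable {V : Type*} (N : V → Finset V) (hN : ∀ v, v ∈ N v) (p : V → ℝ)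

def bellman (T : V → ℝ) : V → ℝ := fun v => 1 + (1 - p v) * (N v).inf' ⟨v, hN v⟩ T

variable {N hN p}

theorem bellman_monotone (hp : ∀ v, p v ≤ 1) : Monotone (bellman N hN p) := by
  intro T S hTS v
  have := sub_nonneg.2 (hp v)
  unfold bellman
  gcongr
  exact Finset.inf'_mono_fun fun u _ => hTS u

theorem continuous_bellman : Continuous (bellman N hN p) :=
  continuous_pi fun _ => continuous_const.add <| continuous_const.mul <|
    Continuous.finset_inf'_apply _ fun u _ => continuous_apply u

theorem bellman_nonneg (hp : ∀ v, p v ≤ 1) {T : V → ℝ} (hT : 0 ≤ T) : 0 ≤ bellman N hN p T :=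
  fun v => add_nonneg zero_le_one <| mul_nonneg (sub_nonneg.2 (hp v)) <|
    Finset.le_inf' _ _ fun u _ => hT u

theorem bellman_one_div_le (hp : ∀ v, 0 < p v ∧ p v ≤ 1) :
    bellman N hN p (fun v => 1 / p v) ≤ fun v => 1 / p v := by
  intro v
  have hinf := mul_le_mul_of_nonneg_left (Finset.inf'_le (fun u => 1 / p u) (hN v))
    (sub_nonneg.2 (hp v).2)
  calc bellman N hN p (fun v => 1 / p v) v ≤ 1 + (1 - p v) * (1 / p v) := by
        simp only [bellman]; linarith
    _ = 1 / p v := by have := (hp v).1.ne'; field_simp; ring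

theorem bddBelow_range_iterate_bellman (hp : ∀ v, 0 < p v ∧ p v ≤ 1) :
    BddBelow (Set.range fun n => (bellman N hN p)^[n] fun v => 1 / p v) := by
  refine ⟨0, ?_⟩
  rintro _ ⟨n, rfl⟩
  induction n with
  | zero => exact fun v => (one_div_pos.2 (hp v).1).le
  | succ n ih =>
    dsimp only at ih ⊢
    rw [iterate_succ_apply']
    exact bellman_nonneg (fun v => (hp v).2) ih

theorem chaseTime_eq_iterate_bellman (hp : ∀ v, 0 < p v ∧ p v ≤ 1) {Tseq : ℕ → V → ℝ}
    (hTseq1 : ∀ v, Tseq 1 v = 1 / p v)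
    (hTseqS : ∀ i, 1 ≤ i → ∀ v,
      Tseq (i + 1) v = min (Tseq i v) (1 + (1 - p v) * (N v).inf' ⟨v, hN v⟩ (Tseq i)))
    (n : ℕ) : Tseq (n + 1) = (bellman N hN p)^[n] fun v => 1 / p v := by
  induction n with
  | zero => exact funext hTseq1
  | succ n ih =>
    have hanti := (bellman_monotone (fun v => (hp v).2)).antitone_iterate_of_map_le
      (bellman_one_div_le (hN := hN) hp)
    have hdec : bellman N hN p (Tseq (n + 1)) ≤ Tseq (n + 1) := by
      rw [ih, ← iterate_succ_apply' (bellman N hN p)]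
      exact hanti n.le_succ
    funext v
    rw [hTseqS (n + 1) n.succ_pos v, iterate_succ_apply', ← ih]
    exact min_eq_right (hdec v)

end Bellman

theorem stmt_14_general {V : Type*}
    (N : V → Finset V) (hN : ∀ v, v ∈ N v)
    (p : V → ℝ) (hp : ∀ v, 0 < p v ∧ p v ≤ 1)
    (Tstar : V → ℝ)
    (huniq : ∀ T : V → ℝ,
      (∀ v, T v = 1 + (1 - p v) * (N v).inf' ⟨v, hN v⟩ T) → T = Tstar)
    (Tseq : ℕ → V → ℝ)
    (hTseq1 : ∀ v, Tseq 1 v = 1 / p v)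
    (hTseqS : ∀ i, 1 ≤ i → ∀ v,
      Tseq (i + 1) v =
        min (Tseq i v) (1 + (1 - p v) * (N v).inf' ⟨v, hN v⟩ (Tseq i))) :
    ∀ v, (∀ i, 1 ≤ i → Tseq (i + 1) v ≤ Tseq i v) ∧
      Filter.Tendsto (fun i => Tseq i v) Filter.atTop (nhds (Tstar v)) := by
  obtain ⟨L, hLfix, hLlim⟩ := (bellman_monotone (hN := hN) fun v => (hp v).2)
    |>.exists_isFixedPt_tendsto_iterate continuous_bellman (bellman_one_div_le hp)
    (bddBelow_range_iterate_bellman hp)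
  have hL : L = Tstar := huniq L fun v => (congrFun hLfix v).symm
  intro v
  refine ⟨fun i hi => hTseqS i hi v ▸ min_le_left _ _, ?_⟩
  rw [← tendsto_add_atTop_iff_nat 1, ← hL]
  exact (tendsto_pi_nhds.1 hLlim v).congr fun n =>
    congrFun (chaseTime_eq_iterate_bellman hp hTseq1 hTseqS n).symm v

/-- Let `(Tseq i)` be the chase-time iteration. Then for every vertex
`v`, the sequence `(Tseq i v)` is nonincreasing (for `i ≥ 1`) and converges to
`Tstar v`, where `Tstar` is the unique Bellman fixed point. -/
theorem stmt_14 {V : Type*} [Fintype V] [Nonempty V]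
    (N : V → Finset V) (hN : ∀ v, v ∈ N v)
    (p : V → ℝ) (hp : ∀ v, 0 < p v ∧ p v ≤ 1)
    (Tstar : V → ℝ)
    (hTstar : ∀ v, Tstar v = 1 + (1 - p v) * (N v).inf' ⟨v, hN v⟩ Tstar)
    (huniq : ∀ T : V → ℝ,
      (∀ v, T v = 1 + (1 - p v) * (N v).inf' ⟨v, hN v⟩ T) → T = Tstar)
    (Tseq : ℕ → V → ℝ)
    (hTseq1 : ∀ v, Tseq 1 v = 1 / p v)
    (hTseqS : ∀ i, 1 ≤ i → ∀ v,
      Tseq (i + 1) v =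
        min (Tseq i v) (1 + (1 - p v) * (N v).inf' ⟨v, hN v⟩ (Tseq i))) :
    ∀ v, (∀ i, 1 ≤ i → Tseq (i + 1) v ≤ Tseq i v) ∧
      Filter.Tendsto (fun i => Tseq i v) Filter.atTop (nhds (Tstar v)) :=
  stmt_14_general N hN p hp Tstar huniq Tseq hTseq1 hTseqS
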